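/- For every n ≥ 1, the class of languages accepted by stateless deterministic pushdown automata with at most n pushdown symbols is strictly contained in the class for n+1 pushdown symbols, witnessed by a language over a binary alphabet. -/

import Mathlib

/-- The binary input alphabet `{a, b}`. -/
inductive Bin : Type
  | a : Bin
  | b : Bin
deriving DecidableEq

/-- The language `L_n = { b^k a | 1 ≤ k ≤ n-1 }` over `{a, b}`. -/
def Ln (n : ℕ) : Set (List Bin) :=
  {w | ∃ k, 1 ≤ k ∧ k ≤ n - 1 ∧ w = List.replicate k Bin.b ++ [Bin.a]}

/-- A stateless deterministic pushdown automaton over input alphabet `A`: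
one (implicit) state, pushdown alphabet `Γ`, transition function `δ`
(where `δ X none` is an ε-move on top symbol `X`, and `δ X (some a)` is an
input move), an initial pushdown string `α ≠ []`.  Determinism: if an ε-move
is defined on `X`, then no input move is defined on `X`. -/
structure SDPDA (A : Type) where
  Γ : Type
  [instΓ : Fintype Γ]
  δ : Γ → Option A → Option (List Γ)
  det : ∀ X : Γ, δ X none ≠ none → ∀ a : A, δ X (some a) = none
  α : List Γ
  α_ne : α ≠ []

attribute [instance] SDPDA.instΓ

/-- `M.Steps γ w γ'` : starting with pushdown content `γ` (top of the pushdown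
is the head of the list), the automaton can read the input string `w` and end
with pushdown content `γ'`. -/
inductive SDPDA.Steps {A : Type} (M : SDPDA A) : List M.Γ → List A → List M.Γ → Prop
  | refl (γ : List M.Γ) : SDPDA.Steps M γ [] γ
  | input {X : M.Γ} {γ w : List M.Γ} {a : A} {ws : List A} {γ' : List M.Γ} :
      M.δ X (some a) = some w → SDPDA.Steps M (w ++ γ) ws γ' →
      SDPDA.Steps M (X :: γ) (a :: ws) γ'
  | eps {X : M.Γ} {γ w : List M.Γ} {ws : List A} {γ' : List M.Γ} :
      M.δ X none = some w → SDPDA.Steps M (w ++ γ) ws γ' →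
      SDPDA.Steps M (X :: γ) ws γ'

/-- Acceptance by empty pushdown. -/
def SDPDA.Accepts {A : Type} (M : SDPDA A) (w : List A) : Prop :=
  M.Steps M.α w []

/-- The family `n`-SDPDA of languages over the binary alphabet `{a, b}`
accepted by stateless deterministic pushdown automata with at most `n`
pushdown symbols. -/
def nSDPDA (n : ℕ) : Set (Set (List Bin)) :=
  {L | ∃ M : SDPDA Bin, Fintype.card M.Γ ≤ n ∧
        ∀ w : List Bin, M.Accepts w ↔ w ∈ L}

/-!
Every stack `γ` of a stateless DPDA has a language `L(γ)`, and `L(γ₁ ++ γ₂) = L(γ₁) L(γ₂)`.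
Determinism makes every `L(γ)` prefix-free, so a factor containing the empty word is `{ε}`;
hence if `L(γ)` contains a one-letter word, it equals `L(Z)` for a single symbol `Z ∈ γ`.
If `L(α) = L_{n+1} = { bᵏa | 1 ≤ k ≤ n }`, then after reading `bᵏ` the stack has language
`{ bᵗa | t ≤ n - k }`; these are `n` distinct languages, all containing `a`, so they are the
languages of `n` distinct symbols. With at most `n` symbols, every symbol then accepts `a`,
so `a^|α| ∈ L(α)`, which is absurd. A counter with `n + 1` symbols accepts `L_{n+1}`.
-/

open List

namespace SDPDA

variable {A : Type} {M : SDPDA A}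

def stackLang (M : SDPDA A) (γ : List M.Γ) : Language A :=
  {w | M.Steps γ w []}

namespace Steps

theorem trans {γ γ' γ'' : List M.Γ} {u v : List A}
    (h₁ : M.Steps γ u γ') (h₂ : M.Steps γ' v γ'') : M.Steps γ (u ++ v) γ'' := by
  induction h₁ with
  | refl _ => exact h₂
  | input hδ _ ih => exact input hδ (ih h₂)
  | eps hδ _ ih => exact eps hδ (ih h₂)

theorem append_right {γ₁ γ₂ : List M.Γ} {u : List A} (δ : List M.Γ)
    (h : M.Steps γ₁ u γ₂) : M.Steps (γ₁ ++ δ) u (γ₂ ++ δ) := by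
  induction h with
  | refl _ => exact refl _
  | input hδ _ ih => exact input hδ (by rwa [List.append_assoc] at ih)
  | eps hδ _ ih => exact eps hδ (by rwa [List.append_assoc] at ih)

theorem eq_nil_of_nil {w : List A} {γ : List M.Γ} (h : M.Steps [] w γ) : w = [] ∧ γ = [] := by
  cases h
  exact ⟨rfl, rfl⟩

theorem exists_split_input {γ γ' : List M.Γ} {w : List A} (h : M.Steps γ w γ') :
    ∀ u v, w = u ++ v → ∃ σ, M.Steps γ u σ ∧ M.Steps σ v γ' := by
  induction h with
  | refl γ =>
    intro u v huv
    obtain ⟨rfl, rfl⟩ := List.append_eq_nil_iff.mp huv.symm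
    exact ⟨γ, refl _, refl _⟩
  | input hδ hs ih =>
    rintro (_ | ⟨x, u⟩) v huv
    · rw [List.nil_append] at huv
      exact ⟨_, refl _, huv ▸ input hδ hs⟩
    · obtain ⟨rfl, hws⟩ := List.cons_eq_cons.mp huv
      obtain ⟨σ, h₁, h₂⟩ := ih u v hws
      exact ⟨σ, input hδ h₁, h₂⟩
  | eps hδ _ ih =>
    intro u v huv
    obtain ⟨σ, h₁, h₂⟩ := ih u v huv
    exact ⟨σ, eps hδ h₁, h₂⟩

theorem exists_split_stack {γ₁ γ₂ : List M.Γ} {w : List A} (h : M.Steps (γ₁ ++ γ₂) w []) :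
    ∃ u v, M.Steps γ₁ u [] ∧ M.Steps γ₂ v [] ∧ u ++ v = w := by
  generalize hγ : γ₁ ++ γ₂ = γ at h
  generalize hε : ([] : List M.Γ) = ε at h
  induction h generalizing γ₁ with
  | refl γ =>
    subst hε
    obtain ⟨rfl, rfl⟩ := List.append_eq_nil_iff.mp hγ
    exact ⟨[], [], refl _, refl _, rfl⟩
  | @input X γ β x ws _ hδ hs ih =>
    subst hε
    rcases γ₁ with _ | ⟨Y, γ₁⟩
    · obtain rfl : γ₂ = X :: γ := hγ
      exact ⟨[], x :: ws, refl _, input hδ hs, rfl⟩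
    · obtain ⟨rfl, rfl⟩ := List.cons_eq_cons.mp hγ
      obtain ⟨u, v, h₁, h₂, rfl⟩ := ih (γ₁ := β ++ γ₁) (List.append_assoc ..) rfl
      exact ⟨x :: u, v, input hδ h₁, h₂, rfl⟩
  | @eps X γ β ws _ hδ hs ih =>
    subst hε
    rcases γ₁ with _ | ⟨Y, γ₁⟩
    · obtain rfl : γ₂ = X :: γ := hγ
      exact ⟨[], ws, refl _, eps hδ hs, rfl⟩
    · obtain ⟨rfl, rfl⟩ := List.cons_eq_cons.mp hγ
      obtain ⟨u, v, h₁, h₂, rfl⟩ := ih (γ₁ := β ++ γ₁) (List.append_assoc ..) rfl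
      exact ⟨u, v, eps hδ h₁, h₂, rfl⟩

/-- Determinism: a run that empties the stack passes through every configuration that
some run on a prefix of its input reaches. -/
theorem of_append {γ σ : List M.Γ} {u : List A} (h : M.Steps γ u σ) :
    ∀ v, M.Steps γ (u ++ v) [] → M.Steps σ v [] := by
  induction h with
  | refl _ => exact fun _ h => h
  | @input X γ β x ws _ hδ _ ih =>
    intro v h
    cases h with
    | input hδ' h' => exact ih v (Option.some_injective _ (hδ.symm.trans hδ') ▸ h')
    | eps hε _ => exact absurd hδ (by simp [M.det X (by simp [hε]) x])
  | @eps X γ β ws _ hδ _ ih =>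
    intro v h
    generalize hw : ws ++ v = w at h
    cases h with
    | input hδ' _ => exact absurd hδ' (by simp [M.det X (by simp [hδ])])
    | eps hε h' => exact ih v (hw ▸ Option.some_injective _ (hδ.symm.trans hε) ▸ h')

theorem inv_cons_of_no_eps {X : M.Γ} {γ γ' : List M.Γ} {x : A} {w : List A}
    (hε : M.δ X none = none) (h : M.Steps (X :: γ) (x :: w) γ') :
    ∃ β, M.δ X (some x) = some β ∧ M.Steps (β ++ γ) w γ' := by
  cases h with
  | input hδ h => exact ⟨_, hδ, h⟩
  | eps hδ _ => simp [hε] at hδ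

end Steps

theorem stackLang_nil : M.stackLang [] = 1 := by
  ext w
  exact ⟨fun h => (Steps.eq_nil_of_nil h).1, fun h => h ▸ Steps.refl []⟩

theorem stackLang_append (γ₁ γ₂ : List M.Γ) :
    M.stackLang (γ₁ ++ γ₂) = M.stackLang γ₁ * M.stackLang γ₂ := by
  ext w
  rw [Language.mem_mul]
  constructor
  · intro h
    obtain ⟨u, v, hu, hv, huv⟩ := Steps.exists_split_stack h
    exact ⟨u, hu, v, hv, huv⟩
  · rintro ⟨u, hu, v, hv, rfl⟩
    exact (hu.append_right γ₂).trans hv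

theorem stackLang_of_steps {γ σ : List M.Γ} {u : List A} (h : M.Steps γ u σ) :
    M.stackLang σ = (M.stackLang γ).leftQuotient u := by
  ext v
  exact ⟨h.trans, h.of_append v⟩

theorem exists_stackLang_eq_leftQuotient {γ : List M.Γ} {u v : List A}
    (h : v ∈ (M.stackLang γ).leftQuotient u) :
    ∃ σ, M.stackLang σ = (M.stackLang γ).leftQuotient u := by
  obtain ⟨σ, hσ, -⟩ := Steps.exists_split_input h u v rfl
  exact ⟨σ, stackLang_of_steps hσ⟩

theorem stackLang_eq_one_of_nil_mem {γ : List M.Γ} (h : [] ∈ M.stackLang γ) :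
    M.stackLang γ = 1 := by
  rw [← stackLang_nil, stackLang_of_steps h]
  rfl

theorem exists_mem_stackLang_eq_of_singleton_mem {x : A} :
    ∀ {τ : List M.Γ}, [x] ∈ M.stackLang τ → ∃ Z ∈ τ, M.stackLang [Z] = M.stackLang τ
  | [], h => by simp [stackLang_nil, Language.mem_one] at h
  | X :: β, h => by
    rw [← List.singleton_append, stackLang_append] at h ⊢
    obtain ⟨u, hu, v, hv, huv⟩ := Language.mem_mul.mp h
    rcases List.append_eq_singleton_iff.mp huv with ⟨rfl, rfl⟩ | ⟨rfl, rfl⟩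
    · obtain ⟨Z, hZ, hZβ⟩ := exists_mem_stackLang_eq_of_singleton_mem hv
      exact ⟨Z, List.mem_cons_of_mem X hZ, by rw [hZβ, stackLang_eq_one_of_nil_mem hu, one_mul]⟩
    · exact ⟨X, List.mem_cons_self, by rw [stackLang_eq_one_of_nil_mem hv, mul_one]⟩

/-- Pigeonhole: at least `Fintype.card M.Γ` distinct stack languages containing a one-letter
word are languages of distinct single symbols, so they exhaust the symbols. -/
theorem exists_stackLang_singleton_eq {ι : Type} [Fintype ι]
    (hcard : Fintype.card M.Γ ≤ Fintype.card ι) {f : ι → Language A} (hf : Function.Injective f)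
    (hreach : ∀ i, ∃ γ, M.stackLang γ = f i)
    {x : A} (hx : ∀ i, [x] ∈ f i) (X : M.Γ) : ∃ i, M.stackLang [X] = f i := by
  choose γ hγ using hreach
  choose Z _ hZ using fun i => exists_mem_stackLang_eq_of_singleton_mem (hγ i ▸ hx i)
  have hZinj : Function.Injective Z := fun i j h => hf (by rw [← hγ, ← hγ, ← hZ, ← hZ, h])
  have hZbij := (Fintype.bijective_iff_injective_and_card Z).2
    ⟨hZinj, le_antisymm (Fintype.card_le_of_injective Z hZinj) hcard⟩
  obtain ⟨i, rfl⟩ := hZbij.2 X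
  exact ⟨i, by rw [hZ, hγ]⟩

theorem replicate_length_mem_stackLang {x : A} (h : ∀ X : M.Γ, [x] ∈ M.stackLang [X]) :
    ∀ γ : List M.Γ, replicate γ.length x ∈ M.stackLang γ
  | [] => by simp [stackLang_nil, Language.mem_one]
  | X :: γ => by
    rw [← List.singleton_append, stackLang_append]
    exact Language.mem_mul.mpr ⟨[x], h X, _, replicate_length_mem_stackLang h γ, rfl⟩

end SDPDA

def bPowA (m : ℕ) : Language Bin :=
  {w | ∃ t ≤ m, w = replicate t Bin.b ++ [Bin.a]}

theorem replicate_b_append_mem_bPowA_iff {t m : ℕ} :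
    replicate t Bin.b ++ [Bin.a] ∈ bPowA m ↔ t ≤ m := by
  refine ⟨fun ⟨s, hs, h⟩ => ?_, fun h => ⟨t, h, rfl⟩⟩
  have : t = s := by simpa using congrArg List.length h
  omega

theorem singleton_a_mem_bPowA (m : ℕ) : [Bin.a] ∈ bPowA m :=
  replicate_b_append_mem_bPowA_iff.mpr m.zero_le

theorem bPowA_injective : Function.Injective bPowA := by
  have hle {m m' : ℕ} (h : bPowA m = bPowA m') : m ≤ m' :=
    replicate_b_append_mem_bPowA_iff.mp (h ▸ replicate_b_append_mem_bPowA_iff.mpr le_rfl)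
  exact fun m m' h => le_antisymm (hle h) (hle h.symm)

theorem exists_of_replicate_b_append_eq {k j : ℕ} {v : List Bin}
    (h : replicate k Bin.b ++ v = replicate j Bin.b ++ [Bin.a]) :
    ∃ t, j = k + t ∧ v = replicate t Bin.b ++ [Bin.a] := by
  induction k generalizing j with
  | zero => exact ⟨j, (zero_add j).symm, h⟩
  | succ k ih =>
    cases j with
    | zero => simp [replicate_succ] at h
    | succ j =>
      obtain ⟨t, rfl, hv⟩ := ih (by simpa [replicate_succ] using h)
      exact ⟨t, by omega, hv⟩

theorem leftQuotient_Ln_succ {k m n : ℕ} (hk : 1 ≤ k) (hkm : k + m = n) :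
    Language.leftQuotient (Ln (n + 1)) (replicate k Bin.b) = bPowA m := by
  ext v
  simp only [Ln, bPowA, add_tsub_cancel_right]
  constructor
  · rintro ⟨j, -, hj, h⟩
    obtain ⟨t, rfl, rfl⟩ := exists_of_replicate_b_append_eq h
    exact ⟨t, by omega, rfl⟩
  · rintro ⟨t, ht, rfl⟩
    exact ⟨k + t, by omega, by omega, by rw [replicate_add, List.append_assoc]⟩

theorem replicate_a_not_mem_Ln (m n : ℕ) : replicate (m + 1) Bin.a ∉ Ln n := by
  rintro ⟨_ | k, hk, -, h⟩
  · omega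
  · simp [replicate_succ] at h

theorem Ln_succ_not_mem_nSDPDA (n : ℕ) : Ln (n + 1) ∉ nSDPDA n := by
  rintro ⟨M, hcard, hacc⟩
  have hα : M.stackLang M.α = Ln (n + 1) := Set.ext hacc
  have hreach (i : Fin n) : ∃ γ, M.stackLang γ = bPowA i := by
    have hq := leftQuotient_Ln_succ (k := n - i) (m := i) (n := n) (by omega) (by omega)
    rw [← hα] at hq
    rw [← hq]
    exact SDPDA.exists_stackLang_eq_leftQuotient (hq ▸ singleton_a_mem_bPowA i)
  have hsym (X : M.Γ) : [Bin.a] ∈ M.stackLang [X] := by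
    obtain ⟨i, hi⟩ := SDPDA.exists_stackLang_singleton_eq (by simpa using hcard)
      (bPowA_injective.comp Fin.val_injective) hreach (fun i => singleton_a_mem_bPowA i) X
    exact hi ▸ singleton_a_mem_bPowA i
  obtain ⟨X, β, hXβ⟩ := List.exists_cons_of_ne_nil M.α_ne
  have := SDPDA.replicate_length_mem_stackLang hsym M.α
  rw [hα, hXβ] at this
  exact replicate_a_not_mem_Ln _ _ this

/-- Symbol `i` records that `i` letters `b` have been read. -/
def counter (n : ℕ) : SDPDA Bin where
  Γ := Fin (n + 1)
  δ i
    | none => none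
    | some Bin.a => if 1 ≤ (i : ℕ) then some [] else none
    | some Bin.b => if h : (i : ℕ) < n then some [⟨i + 1, by omega⟩] else none
  det _ h _ := absurd rfl h
  α := [0]
  α_ne := List.cons_ne_nil _ _

theorem counter_steps_iff {n : ℕ} (i : Fin (n + 1)) (w : List Bin) :
    (counter n).Steps [i] w [] ↔
      ∃ k, 1 ≤ (i : ℕ) + k ∧ (i : ℕ) + k ≤ n ∧ w = replicate k Bin.b ++ [Bin.a] := by
  constructor
  · induction w generalizing i with
    | nil =>
      intro h
      cases h with
      | eps hδ _ => simp [counter] at hδ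
    | cons x w ih =>
      intro h
      obtain ⟨β, hδ, hs⟩ := SDPDA.Steps.inv_cons_of_no_eps rfl h
      cases x with
      | a =>
        simp only [counter] at hδ
        split_ifs at hδ with hi
        cases hδ
        obtain ⟨rfl, -⟩ := SDPDA.Steps.eq_nil_of_nil hs
        exact ⟨0, by omega, by omega, rfl⟩
      | b =>
        simp only [counter] at hδ
        split_ifs at hδ with hi
        cases hδ
        obtain ⟨k, hk₁, hk₂, rfl⟩ := ih _ hs
        exact ⟨k + 1, by simp at hk₁; omega, by simp at hk₂; omega, rfl⟩
  · rintro ⟨k, hk₁, hk₂, rfl⟩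
    induction k generalizing i with
    | zero =>
      have hi : 1 ≤ (i : ℕ) := by omega
      exact .input (w := []) (by simp [counter, hi]) (.refl [])
    | succ k ih =>
      have hi : (i : ℕ) < n := by omega
      exact .input (w := [(⟨i + 1, by omega⟩ : Fin (n + 1))]) (by simp [counter, hi])
        (ih ⟨i + 1, by omega⟩ (by simp; omega) (by simp; omega))

theorem Ln_succ_mem_nSDPDA_succ (n : ℕ) : Ln (n + 1) ∈ nSDPDA (n + 1) := by
  refine ⟨counter n, (Fintype.card_fin _).le, fun w => ?_⟩
  show (counter n).Steps [(0 : Fin (n + 1))] w [] ↔ _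
  simp [counter_steps_iff, Ln]

theorem nSDPDA_mono {m n : ℕ} (h : m ≤ n) : nSDPDA m ⊆ nSDPDA n :=
  fun _ ⟨M, hM, hL⟩ => ⟨M, hM.trans h, hL⟩

theorem nSDPDA_ssubset_general (n : ℕ) : nSDPDA n ⊂ nSDPDA (n + 1) :=
  (Set.ssubset_iff_of_subset (nSDPDA_mono n.le_succ)).2
    ⟨Ln (n + 1), Ln_succ_mem_nSDPDA_succ n, Ln_succ_not_mem_nSDPDA n⟩

/-- For every `n ≥ 1`, `n`-SDPDA is strictly contained in
`(n+1)`-SDPDA, already for languages over a binary alphabet. -/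
theorem nSDPDA_ssubset (n : ℕ) (hn : 1 ≤ n) : nSDPDA n ⊂ nSDPDA (n + 1) :=
  nSDPDA_ssubset_general n
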